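/- Any C² solution ψ of the PDE ∂_kψ ∂_kψ ∂_{ij}ψ + ∂_kψ ∂_lψ ∂_{kl}ψ δ_{ij} = ∂_iψ ∂_{jk}ψ ∂_kψ + ∂_jψ ∂_{ik}ψ ∂_kψ on an open set of ℝ² is harmonic at every point where its gradient is nonzero: taking the trace of the equation in dimension n = 2 yields |∇ψ|² Δψ = 0, hence Δψ = 0 wherever ∇ψ ≠ 0. -/

import Mathlib

open Real

/-- First partial derivative `∂ᵢ f` on `ℝ²`. -/
noncomputable def pd (i : Fin 2) (f : (Fin 2 → ℝ) → ℝ) (x : Fin 2 → ℝ) : ℝ :=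
  fderiv ℝ f x (Pi.single i 1)

/-- Second partial derivative `∂ᵢ∂ⱼ f`. -/
noncomputable def pd2 (i j : Fin 2) (f : (Fin 2 → ℝ) → ℝ) (x : Fin 2 → ℝ) : ℝ :=
  pd i (pd j f) x

/-! Pointwise, with `g = ∇ψ` and `H = ∇²ψ`, the equation is an algebraic identity; its trace is
`|g|² tr H + n gᵀHg = 2 gᵀHg`, so in dimension `n = 2` the cubic term drops out and
`|g|² tr H = 0`. -/

theorem sum_mul_self_mul_trace_eq_of_cubic_identity {ι : Type*} [Fintype ι] [DecidableEq ι]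
    (g : ι → ℝ) (H : ι → ι → ℝ)
    (h : ∀ i j, (∑ k, g k * g k) * H i j
        + (∑ k, ∑ l, g k * g l * H k l) * (if i = j then (1:ℝ) else 0)
      = g i * (∑ k, H j k * g k) + g j * (∑ k, H i k * g k)) :
    (∑ k, g k * g k) * ∑ i, H i i
      = (2 - Fintype.card ι) * ∑ k, ∑ l, g k * g l * H k l := by
  set Q := ∑ k, ∑ l, g k * g l * H k l
  have hlhs : ∑ i, ((∑ k, g k * g k) * H i i + Q * (if i = i then (1:ℝ) else 0))
      = (∑ k, g k * g k) * ∑ i, H i i + Fintype.card ι * Q := by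
    simp [Finset.sum_add_distrib, Finset.mul_sum]
  have hrhs : ∑ i, (g i * (∑ k, H i k * g k) + g i * (∑ k, H i k * g k)) = 2 * Q := by
    simp only [← two_mul, Q, Finset.mul_sum]
    exact Finset.sum_congr rfl fun _ _ => Finset.sum_congr rfl fun _ _ => by ring
  have htrace := Finset.sum_congr rfl fun i (_ : i ∈ Finset.univ) => h i i
  rw [hlhs, hrhs] at htrace
  linear_combination htrace

theorem trace_eq_zero_of_cubic_identity_of_ne_zero (g : Fin 2 → ℝ) (H : Fin 2 → Fin 2 → ℝ)
    (h : ∀ i j, (∑ k, g k * g k) * H i j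
        + (∑ k, ∑ l, g k * g l * H k l) * (if i = j then (1:ℝ) else 0)
      = g i * (∑ k, H j k * g k) + g j * (∑ k, H i k * g k))
    (hg : ∃ i, g i ≠ 0) :
    H 0 0 + H 1 1 = 0 := by
  have hnorm : ∑ k, g k * g k ≠ 0 := by
    simpa only [ne_eq, Finset.sum_mul_self_eq_zero_iff, Finset.mem_univ, true_implies,
      not_forall] using hg
  have hmul := sum_mul_self_mul_trace_eq_of_cubic_identity g H h
  rw [Fintype.card_fin, Nat.cast_ofNat, sub_self, zero_mul] at hmul
  simpa only [Fin.sum_univ_two] using (mul_eq_zero.mp hmul).resolve_left hnorm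

theorem cubic_pde_implies_harmonic_in_dim_two_general
    (U : Set (Fin 2 → ℝ)) (ψ : (Fin 2 → ℝ) → ℝ)
    (hpde : ∀ x ∈ U, ∀ i j : Fin 2,
      (∑ k, pd k ψ x * pd k ψ x) * pd2 i j ψ x
        + (∑ k, ∑ l, pd k ψ x * pd l ψ x * pd2 k l ψ x) * (if i = j then (1:ℝ) else 0)
      = pd i ψ x * (∑ k, pd2 j k ψ x * pd k ψ x)
        + pd j ψ x * (∑ k, pd2 i k ψ x * pd k ψ x)) :
    ∀ x ∈ U, (∃ i : Fin 2, pd i ψ x ≠ 0) → pd2 0 0 ψ x + pd2 1 1 ψ x = 0 :=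
  fun x hx hgrad =>
    trace_eq_zero_of_cubic_identity_of_ne_zero (fun k => pd k ψ x) (fun i j => pd2 i j ψ x)
      (hpde x hx) hgrad

/-- A `C²` solution of the cubic PDE
`∂ₖψ∂ₖψ ∂ᵢⱼψ + ∂ₖψ∂ₗψ∂ₖₗψ δᵢⱼ = ∂ᵢψ ∂ⱼₖψ∂ₖψ + ∂ⱼψ ∂ᵢₖψ∂ₖψ`
on an open subset of `ℝ²` is harmonic at every point where its gradient does not vanish. -/
theorem cubic_pde_implies_harmonic_in_dim_two
    (U : Set (Fin 2 → ℝ)) (hU : IsOpen U) (ψ : (Fin 2 → ℝ) → ℝ)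
    (hreg : ContDiffOn ℝ 2 ψ U)
    (hpde : ∀ x ∈ U, ∀ i j : Fin 2,
      (∑ k, pd k ψ x * pd k ψ x) * pd2 i j ψ x
        + (∑ k, ∑ l, pd k ψ x * pd l ψ x * pd2 k l ψ x) * (if i = j then (1:ℝ) else 0)
      = pd i ψ x * (∑ k, pd2 j k ψ x * pd k ψ x)
        + pd j ψ x * (∑ k, pd2 i k ψ x * pd k ψ x)) :
    ∀ x ∈ U, (∃ i : Fin 2, pd i ψ x ≠ 0) → pd2 0 0 ψ x + pd2 1 1 ψ x = 0 :=
  cubic_pde_implies_harmonic_in_dim_two_general U ψ hpde
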